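/- arXiv:2005.07853 — 4 statements merged into one kernel-verified Lean document; each statement's English description precedes it below -/
import Mathlib

section
/- Let S be a full-column-rank matrix H ∈ ℂ^{N_b×N_u} with pseudoinverse H† = (H^H H)^{-1} H^H, and let K ∈ ℂ^{N_b×N_b} be Hermitian positive definite. Then eig_min(H^H K^{-1} H) ≥ 1 / eig_max(H† K H†^H). -/
open Matrix ComplexOrder

/-!
Let `v` be a unit eigenvector of `A = Hᴴ K⁻¹ H` with eigenvalue `λ`, and put `H† = (Hᴴ H)⁻¹ Hᴴ`,
`B = H† K H†ᴴ`. The vectors `x = H†ᴴ v` and `y = K⁻¹ H v` satisfy `xᴴ K y = vᴴ H† H v = 1`, so the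
Cauchy–Schwarz inequality for the inner product `⟪x, y⟫ = xᴴ K y` gives
`1 ≤ (xᴴ K x) (yᴴ K y) = (vᴴ B v) λ ≤ eig_max(B) λ`.
-/

namespace Matrix

variable {m n 𝕜 : Type*} [Fintype m] [Fintype n] [RCLike 𝕜]

theorem isUnit_of_rank_eq_card {K : Type*} [Field K] [DecidableEq n] {A : Matrix n n K}
    (h : A.rank = Fintype.card n) : IsUnit A :=
  linearIndependent_cols_iff_isUnit.mp <| linearIndependent_iff_card_eq_finrank_span.mpr <|
    h ▸ A.rank_eq_finrank_span_cols

theorem star_mulVec_dotProduct_mulVec {l : Type*} [Fintype l] (A : Matrix m n 𝕜)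
    (B : Matrix m l 𝕜) (x : n → 𝕜) (y : l → 𝕜) :
    star (A *ᵥ x) ⬝ᵥ (B *ᵥ y) = star x ⬝ᵥ ((Aᴴ * B) *ᵥ y) := by
  rw [star_mulVec, ← dotProduct_mulVec, mulVec_mulVec]

theorem PosSemidef.norm_dotProduct_mulVec_sq_le {K : Matrix n n 𝕜} (hK : K.PosSemidef)
    (x y : n → 𝕜) :
    ‖star x ⬝ᵥ (K *ᵥ y)‖ ^ 2 ≤
      RCLike.re (star x ⬝ᵥ (K *ᵥ x)) * RCLike.re (star y ⬝ᵥ (K *ᵥ y)) := by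
  let _ := K.toSeminormedAddCommGroup hK
  let _ := K.toInnerProductSpace hK
  have h := inner_mul_inner_self_le (𝕜 := 𝕜) x y
  rw [← inner_conj_symm y x, RCLike.norm_conj, ← sq] at h
  simp only [dotProduct_comm (star _)]
  exact h

theorem PosDef.norm_dotProduct_sq_le_of_mul_eq_one [DecidableEq m] [DecidableEq n]
    {K : Matrix m m 𝕜} (hK : K.PosDef) {P : Matrix n m 𝕜} {H : Matrix m n 𝕜} (hPH : P * H = 1)
    (v : n → 𝕜) :
    ‖star v ⬝ᵥ v‖ ^ 2 ≤ RCLike.re (star v ⬝ᵥ ((P * K * Pᴴ) *ᵥ v)) *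
      RCLike.re (star v ⬝ᵥ ((Hᴴ * K⁻¹ * H) *ᵥ v)) := by
  have hKK : K * K⁻¹ = 1 := K.mul_nonsing_inv (K.isUnit_iff_isUnit_det.mp hK.isUnit)
  have hKinv : (K⁻¹)ᴴ = K⁻¹ := by rw [conjTranspose_nonsing_inv, hK.isHermitian.eq]
  convert hK.posSemidef.norm_dotProduct_mulVec_sq_le (Pᴴ *ᵥ v) ((K⁻¹ * H) *ᵥ v) using 3 <;>
    rw [mulVec_mulVec, star_mulVec_dotProduct_mulVec] <;> congr 2
  · rw [conjTranspose_conjTranspose, ← Matrix.mul_assoc K, hKK, Matrix.one_mul, hPH, one_mulVec]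
  · rw [conjTranspose_conjTranspose, Matrix.mul_assoc]
  · rw [conjTranspose_mul, hKinv, ← Matrix.mul_assoc K, hKK, Matrix.one_mul, Matrix.mul_assoc]

section Eigenvalues

variable [DecidableEq n] {M : Matrix n n 𝕜}

theorem IsHermitian.posSemidef_iSup_eigenvalues_smul_one_sub (hM : M.IsHermitian) :
    ((⨆ i, hM.eigenvalues i) • (1 : Matrix n n 𝕜) - M).PosSemidef := by
  set c := ⨆ i, hM.eigenvalues i
  set U : Matrix n n 𝕜 := (hM.eigenvectorUnitary : Matrix n n 𝕜)
  have hU : U * Uᴴ = 1 := mem_unitaryGroup_iff.mp hM.eigenvectorUnitary.2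
  have hdiag : c • (1 : Matrix n n 𝕜) - diagonal (RCLike.ofReal ∘ hM.eigenvalues) =
      diagonal fun i ↦ ((c - hM.eigenvalues i : ℝ) : 𝕜) := by
    ext i j
    rcases eq_or_ne i j with rfl | hij <;> simp [*, RCLike.real_smul_eq_coe_mul]
  have hconj : c • (1 : Matrix n n 𝕜) - M =
      U * diagonal (fun i ↦ ((c - hM.eigenvalues i : ℝ) : 𝕜)) * Uᴴ := by
    conv_lhs => rw [hM.spectral_theorem]
    rw [← hdiag, mul_sub, sub_mul, mul_smul_comm, mul_one, smul_mul_assoc, hU]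
    rfl
  rw [hconj]
  refine PosSemidef.mul_mul_conjTranspose_same (posSemidef_diagonal_iff.mpr fun i ↦ ?_) U
  exact_mod_cast sub_nonneg.mpr (le_ciSup (Set.finite_range _).bddAbove i)

theorem IsHermitian.re_dotProduct_mulVec_le_iSup_eigenvalues_mul (hM : M.IsHermitian)
    (x : n → 𝕜) :
    RCLike.re (star x ⬝ᵥ (M *ᵥ x)) ≤ (⨆ i, hM.eigenvalues i) * RCLike.re (star x ⬝ᵥ x) := by
  have h := hM.posSemidef_iSup_eigenvalues_smul_one_sub.re_dotProduct_nonneg x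
  simp only [sub_mulVec, smul_mulVec, one_mulVec, dotProduct_sub, dotProduct_smul, map_sub,
    RCLike.smul_re] at h
  linarith

theorem IsHermitian.star_eigenvectorBasis_dotProduct_self (hM : M.IsHermitian) (i : n) :
    star ⇑(hM.eigenvectorBasis i) ⬝ᵥ ⇑(hM.eigenvectorBasis i) = 1 := by
  rw [dotProduct_comm, ← EuclideanSpace.inner_eq_star_dotProduct, inner_self_eq_norm_sq_to_K,
    hM.eigenvectorBasis.orthonormal.1 i]
  simp

end Eigenvalues

end Matrix

theorem eigMin_lower_bound_general
    (Nb Nu : ℕ)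
    (H : Matrix (Fin Nb) (Fin Nu) ℂ) (hrank : H.rank = Nu)
    (K : Matrix (Fin Nb) (Fin Nb) ℂ) (hK : K.PosDef)
    (h1 : (Hᴴ * K⁻¹ * H).IsHermitian)
    (h2 : ((Hᴴ * H)⁻¹ * Hᴴ * K * ((Hᴴ * H)⁻¹ * Hᴴ)ᴴ).IsHermitian) :
    1 / (⨆ i, h2.eigenvalues i) ≤ ⨅ i, h1.eigenvalues i := by
  obtain _ | _ := isEmpty_or_nonempty (Fin Nu)
  · simp
  have hHH : IsUnit (Hᴴ * H).det := (isUnit_iff_isUnit_det _).mp <| isUnit_of_rank_eq_card <| by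
    rw [rank_conjTranspose_mul_self, hrank, Fintype.card_fin]
  have hPH : (Hᴴ * H)⁻¹ * Hᴴ * H = 1 := by rw [Matrix.mul_assoc, nonsing_inv_mul _ hHH]
  refine le_ciInf fun i ↦ ?_
  have hv := h1.star_eigenvectorBasis_dotProduct_self i
  have hCS := hK.norm_dotProduct_sq_le_of_mul_eq_one hPH (h1.eigenvectorBasis i)
  rw [hv, ← h1.eigenvalues_eq i, norm_one, one_pow] at hCS
  have hB := h2.re_dotProduct_mulVec_le_iSup_eigenvalues_mul (h1.eigenvectorBasis i)
  rw [hv, RCLike.one_re, mul_one] at hB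
  have hA : 0 ≤ h1.eigenvalues i :=
    (hK.inv.posSemidef.conjTranspose_mul_mul_same H).eigenvalues_nonneg i
  have hSA : 1 ≤ (⨆ j, h2.eigenvalues j) * h1.eigenvalues i :=
    hCS.trans (mul_le_mul_of_nonneg_right hB hA)
  exact (div_le_iff₀' (pos_of_mul_pos_left (one_pos.trans_le hSA) hA)).mpr hSA

/-- For full-column-rank H with pseudoinverse H† = (H^H H)⁻¹ H^H and Hermitian
positive definite K: eig_min(H^H K⁻¹ H) ≥ 1 / eig_max(H† K H†^H). -/
theorem eigMin_lower_bound
    (Nb Nu : ℕ) (hNu : 0 < Nu)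
    (H : Matrix (Fin Nb) (Fin Nu) ℂ) (hrank : H.rank = Nu)
    (K : Matrix (Fin Nb) (Fin Nb) ℂ) (hK : K.PosDef)
    (h1 : (Hᴴ * K⁻¹ * H).IsHermitian)
    (h2 : ((Hᴴ * H)⁻¹ * Hᴴ * K * ((Hᴴ * H)⁻¹ * Hᴴ)ᴴ).IsHermitian) :
    1 / (⨆ i, h2.eigenvalues i) ≤ ⨅ i, h1.eigenvalues i :=
  eigMin_lower_bound_general Nb Nu H hrank K hK h1 h2
end

section
/- Let F: ℝ_{≥0}^n → ℝ_{>0}^n be a standard interference function, i.e., (positivity) F(λ) > 0 componentwise for all λ ≥ 0, (monotonicity) λ ≥ λ' componentwise implies F(λ) ≥ F(λ'), and (scalability) ρ > 1 implies ρF(λ) > F(ρλ) componentwise. If F has a fixed point λ* = F(λ*), then this fixed point is unique. -/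
/-!
Compare two fixed points `l₁ > 0` and `l₂` through the smallest `ρ` with `l₂ ≤ ρ • l₁`; it is
attained at some coordinate `k`. If `ρ > 1`, monotonicity and scalability give
`l₂ = F l₂ ≤ F (ρ • l₁) < ρ • F l₁ = ρ • l₁` in every coordinate, which is absurd at `k`.
Hence `l₂ ≤ l₁`, and by symmetry the two fixed points coincide.
-/

open Function

variable {ι 𝕜 : Type*} [Field 𝕜] [LinearOrder 𝕜] [IsStrictOrderedRing 𝕜]

theorem exists_le_div_smul_of_pos [Finite ι] [Nonempty ι] {l₁ : ι → 𝕜} (hl₁ : ∀ i, 0 < l₁ i)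
    (l₂ : ι → 𝕜) : ∃ k, l₂ ≤ (l₂ k / l₁ k) • l₁ := by
  obtain ⟨k, hk⟩ := Finite.exists_max fun i ↦ l₂ i / l₁ i
  refine ⟨k, fun i ↦ ?_⟩
  rw [Pi.smul_apply, smul_eq_mul, ← div_le_iff₀ (hl₁ i)]
  exact hk i

theorem le_of_isFixedPt_of_monotone_of_scalable {F : (ι → 𝕜) → ι → 𝕜} [Finite ι]
    (hmono : ∀ l l', 0 ≤ l' → l' ≤ l → F l' ≤ F l)
    (hscale : ∀ ρ : 𝕜, 1 < ρ → ∀ l, 0 ≤ l → ∀ i, F (ρ • l) i < ρ * F l i)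
    {l₁ l₂ : ι → 𝕜} (hl₁ : ∀ i, 0 < l₁ i) (hl₂ : 0 ≤ l₂)
    (h₁ : IsFixedPt F l₁) (h₂ : IsFixedPt F l₂) : l₂ ≤ l₁ := by
  rw [Pi.le_def]
  by_contra! ⟨j, hj⟩
  have : Nonempty ι := ⟨j⟩
  obtain ⟨k, hk⟩ := exists_le_div_smul_of_pos hl₁ l₂
  set ρ := l₂ k / l₁ k
  have hρ : 1 < ρ := by
    have hkj : l₂ j ≤ ρ * l₁ j := hk j
    by_contra! hρ
    nlinarith [hl₁ j]
  have hρl₁ : ρ * l₁ k = l₂ k := div_mul_cancel₀ _ (hl₁ k).ne'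
  have : l₂ k < l₂ k :=
    calc l₂ k = F l₂ k := (congrFun h₂ k).symm
      _ ≤ F (ρ • l₁) k := hmono _ _ hl₂ hk k
      _ < ρ * F l₁ k := hscale ρ hρ l₁ (fun i ↦ (hl₁ i).le) k
      _ = l₂ k := by rw [h₁, hρl₁]
  exact this.false

/-- Yates: a standard interference function (positive, monotone, scalable)
has at most one fixed point. -/
theorem standard_function_unique_fixed_point
    (n : ℕ) (F : (Fin n → ℝ) → (Fin n → ℝ))
    (hpos : ∀ l : Fin n → ℝ, (∀ i, 0 ≤ l i) → ∀ i, 0 < F l i)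
    (hmono : ∀ l l' : Fin n → ℝ, (∀ i, 0 ≤ l' i) → (∀ i, l' i ≤ l i) →
      ∀ i, F l' i ≤ F l i)
    (hscale : ∀ ρ : ℝ, 1 < ρ → ∀ l : Fin n → ℝ, (∀ i, 0 ≤ l i) →
      ∀ i, F (ρ • l) i < ρ * F l i)
    (l₁ l₂ : Fin n → ℝ) (h1n : ∀ i, 0 ≤ l₁ i) (h2n : ∀ i, 0 ≤ l₂ i)
    (h1 : F l₁ = l₁) (h2 : F l₂ = l₂) :
    l₁ = l₂ := by
  have hpos₁ : ∀ i, 0 < l₁ i := fun i ↦ h1 ▸ hpos l₁ h1n i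
  have hpos₂ : ∀ i, 0 < l₂ i := fun i ↦ h2 ▸ hpos l₂ h2n i
  exact le_antisymm
    (le_of_isFixedPt_of_monotone_of_scalable hmono hscale hpos₂ h1n h2 h1)
    (le_of_isFixedPt_of_monotone_of_scalable hmono hscale hpos₁ h2n h1 h2)
end

section
/- Let F: ℝ_{≥0}^n → ℝ_{>0}^n be a standard interference function (positive, monotone, scalable) with a fixed point λ*. Then starting from the all-zero vector λ^{(0)} = 0, the iteration λ^{(n+1)} = F(λ^{(n)}) produces a componentwise nondecreasing sequence bounded above by λ*, hence convergent, and its limit is λ*. -/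
/-!
The iterates `F^[k] 0` increase (by positivity and monotonicity) and stay below every nonnegative
fixed point, so they converge to their supremum `L`. Monotonicity gives `L ≤ F L`; scalability gives
`F L < ρ L` for every `ρ > 1`, because eventually `L ≤ ρ F^[k] 0`. Hence `L` is a positive fixed
point, and scalability forces all nonnegative fixed points to coincide, so `L = λ*`.
-/

open Filter Topology Function

structure IsStandardInterference {ι : Type*} (F : (ι → ℝ) → ι → ℝ) : Prop where
  pos : ∀ l, 0 ≤ l → ∀ i, 0 < F l i
  mono : ∀ l l', 0 ≤ l' → l' ≤ l → F l' ≤ F l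
  scale : ∀ ρ : ℝ, 1 < ρ → ∀ l, 0 ≤ l → ∀ i, F (ρ • l) i < ρ * F l i

namespace IsStandardInterference

variable {ι : Type*} {F : (ι → ℝ) → ι → ℝ}

theorem iterate_nonneg (hF : IsStandardInterference F) (k : ℕ) : 0 ≤ F^[k] 0 := by
  induction k with
  | zero => exact le_rfl
  | succ k ih =>
    rw [iterate_succ_apply']
    exact fun i => (hF.pos _ ih i).le

theorem monotone_iterate (hF : IsStandardInterference F) : Monotone fun k => F^[k] 0 := by
  refine monotone_nat_of_le_succ fun k => ?_
  induction k with
  | zero => exact fun i => (hF.pos 0 le_rfl i).le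
  | succ k ih =>
    simpa only [iterate_succ_apply'] using hF.mono _ _ (hF.iterate_nonneg k) ih

theorem iterate_le_of_isFixedPt (hF : IsStandardInterference F) {x : ι → ℝ} (hx₀ : 0 ≤ x)
    (hx : IsFixedPt F x) (k : ℕ) : F^[k] 0 ≤ x := by
  induction k with
  | zero => exact hx₀
  | succ k ih =>
    calc F^[k + 1] 0 = F (F^[k] 0) := iterate_succ_apply' F k 0
      _ ≤ F x := hF.mono _ _ (hF.iterate_nonneg k) ih
      _ = x := hx

theorem pos_of_isFixedPt (hF : IsStandardInterference F) {x : ι → ℝ} (hx₀ : 0 ≤ x)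
    (hx : IsFixedPt F x) (i : ι) : 0 < x i :=
  (hF.pos x hx₀ i).trans_eq (congrFun hx i)

/-- If `x ≰ y`, scale `y` by the largest ratio `ρ = x j₀ / y j₀ > 1`: then `x ≤ ρ • y`, and
scalability makes the inequality strict at `j₀`, where it is an equality. -/
theorem le_of_isFixedPt [Finite ι] (hF : IsStandardInterference F) {x y : ι → ℝ}
    (hx₀ : 0 ≤ x) (hx : IsFixedPt F x) (hy₀ : 0 ≤ y) (hy : IsFixedPt F y) : x ≤ y := by
  have hy_pos := hF.pos_of_isFixedPt hy₀ hy
  by_contra hxy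
  obtain ⟨j, hj⟩ : ∃ j, y j < x j := by simpa [Pi.le_def] using hxy
  have : Nonempty ι := ⟨j⟩
  obtain ⟨j₀, hj₀⟩ := Finite.exists_max fun i => x i / y i
  set ρ := x j₀ / y j₀
  have hρ : 1 < ρ := ((one_lt_div (hy_pos j)).2 hj).trans_le (hj₀ j)
  have hx_le : x ≤ ρ • y := fun i => (div_le_iff₀ (hy_pos i)).1 (hj₀ i)
  have : x j₀ < x j₀ :=
    calc x j₀ = F x j₀ := (congrFun hx j₀).symm
      _ ≤ F (ρ • y) j₀ := hF.mono _ _ hx₀ hx_le j₀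
      _ < ρ * F y j₀ := hF.scale ρ hρ y hy₀ j₀
      _ = x j₀ := by rw [hy.eq, div_mul_cancel₀ _ (hy_pos j₀).ne']
  exact lt_irrefl _ this

theorem eq_of_isFixedPt [Finite ι] (hF : IsStandardInterference F) {x y : ι → ℝ}
    (hx₀ : 0 ≤ x) (hx : IsFixedPt F x) (hy₀ : 0 ≤ y) (hy : IsFixedPt F y) : x = y :=
  le_antisymm (hF.le_of_isFixedPt hx₀ hx hy₀ hy) (hF.le_of_isFixedPt hy₀ hy hx₀ hx)

section Limit

variable {L : ι → ℝ}

theorem le_apply_of_tendsto_iterate (hF : IsStandardInterference F)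
    (hL : Tendsto (fun k => F^[k] 0) atTop (𝓝 L)) : L ≤ F L := by
  refine le_of_tendsto' ((tendsto_add_atTop_iff_nat 1).2 hL) fun k => ?_
  rw [iterate_succ_apply']
  exact hF.mono _ _ (hF.iterate_nonneg k) (hF.monotone_iterate.ge_of_tendsto hL k)

theorem apply_le_of_tendsto_iterate [Finite ι] (hF : IsStandardInterference F)
    (hL : Tendsto (fun k => F^[k] 0) atTop (𝓝 L)) : F L ≤ L := by
  have hle : ∀ k, F^[k] 0 ≤ L := hF.monotone_iterate.ge_of_tendsto hL
  have hL_pos : ∀ i, 0 < L i := fun i => (hF.pos 0 le_rfl i).trans_le (hle 1 i)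
  have hL₀ : 0 ≤ L := fun i => (hL_pos i).le
  intro i
  refine (le_iff_forall_one_lt_le_mul₀ (hL₀ i)).2 fun ρ hρ => ?_
  have hev : ∀ᶠ k in atTop, ∀ j, L j ≤ ρ * F^[k] 0 j := eventually_all.2 fun j =>
    ((tendsto_pi_nhds.1 hL j).const_mul ρ).eventually
      (eventually_ge_nhds (lt_mul_left (hL_pos j) hρ))
  obtain ⟨k, hk⟩ := hev.exists
  calc F L i ≤ F (ρ • F^[k] 0) i := hF.mono _ _ hL₀ hk i
    _ ≤ ρ * F (F^[k] 0) i := (hF.scale ρ hρ _ (hF.iterate_nonneg k) i).le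
    _ ≤ ρ * L i := by
      rw [← iterate_succ_apply' F k]
      exact mul_le_mul_of_nonneg_left (hle (k + 1) i) (by positivity)
    _ = L i * ρ := mul_comm _ _

theorem isFixedPt_of_tendsto_iterate [Finite ι] (hF : IsStandardInterference F)
    (hL : Tendsto (fun k => F^[k] 0) atTop (𝓝 L)) : IsFixedPt F L :=
  le_antisymm (hF.apply_le_of_tendsto_iterate hL) (hF.le_apply_of_tendsto_iterate hL)

end Limit

end IsStandardInterference

/-- Yates: for a standard interference function with fixed point λ*, the
iteration started from 0 is componentwise nondecreasing, bounded above by λ*,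
and converges to λ*. -/
theorem standard_function_iteration_converges
    (n : ℕ) (F : (Fin n → ℝ) → (Fin n → ℝ))
    (hpos : ∀ l : Fin n → ℝ, (∀ i, 0 ≤ l i) → ∀ i, 0 < F l i)
    (hmono : ∀ l l' : Fin n → ℝ, (∀ i, 0 ≤ l' i) → (∀ i, l' i ≤ l i) →
      ∀ i, F l' i ≤ F l i)
    (hscale : ∀ ρ : ℝ, 1 < ρ → ∀ l : Fin n → ℝ, (∀ i, 0 ≤ l i) →
      ∀ i, F (ρ • l) i < ρ * F l i)
    (lstar : Fin n → ℝ) (hstar_nonneg : ∀ i, 0 ≤ lstar i) (hstar : F lstar = lstar)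
    (seq : ℕ → (Fin n → ℝ))
    (hseq0 : seq 0 = 0) (hseqS : ∀ k, seq (k + 1) = F (seq k)) :
    (∀ k i, seq k i ≤ seq (k + 1) i) ∧
      (∀ k i, seq k i ≤ lstar i) ∧
      Filter.Tendsto seq Filter.atTop (nhds lstar) := by
  have hF : IsStandardInterference F := ⟨hpos, hmono, hscale⟩
  obtain rfl : seq = fun k => F^[k] 0 := funext fun k => by
    induction k with
    | zero => exact hseq0
    | succ k ih => rw [hseqS, ih, iterate_succ_apply']
  have hbdd : ∀ k, F^[k] 0 ≤ lstar := hF.iterate_le_of_isFixedPt hstar_nonneg hstar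
  have hlim := tendsto_atTop_ciSup hF.monotone_iterate ⟨lstar, Set.forall_mem_range.2 hbdd⟩
  have hsup : ⨆ k, F^[k] 0 = lstar :=
    hF.eq_of_isFixedPt (hF.monotone_iterate.ge_of_tendsto hlim 0)
      (hF.isFixedPt_of_tendsto_iterate hlim) hstar_nonneg hstar
  exact ⟨fun k => hF.monotone_iterate k.le_succ, hbdd, hsup ▸ hlim⟩
end

section
/- Fix α ∈ (0,1], γ > 0, nonzero h ∈ ℂ^{N_b}, and for λ ∈ ℝ_{≥0}^m define K(λ) = I + α ∑_k λ_k h_k h_k^H + (1−α) diag(∑_k λ_k h_k h_k^H) for fixed vectors h_k ∈ ℂ^{N_b}. Then the map 𝓕(λ) = 1 / (α(1 + 1/γ) h^H K(λ)^{-1} h) satisfies: (i) 𝓕(λ) > 0 for all λ ≥ 0; (ii) λ ≥ λ' componentwise implies 𝓕(λ) ≥ 𝓕(λ'); (iii) for ρ > 1, ρ𝓕(λ) > 𝓕(ρλ). -/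
open Matrix BigOperators

/-- The interference matrix K(λ) = I + α ∑_k λ_k h_k h_k^H + (1−α) diag(∑_k λ_k h_k h_k^H). -/
noncomputable def Kmat (Nb m : ℕ) (α : ℝ) (hv : Fin m → (Fin Nb → ℂ))
    (l : Fin m → ℝ) : Matrix (Fin Nb) (Fin Nb) ℂ :=
  1 + (α : ℂ) • (∑ k, ((l k : ℝ) : ℂ) • Matrix.vecMulVec (hv k) (star (hv k)))
    + ((1 - α : ℝ) : ℂ) •
        Matrix.diagonal ((∑ k, ((l k : ℝ) : ℂ) • Matrix.vecMulVec (hv k) (star (hv k))).diag)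

/-- The power-update map 𝓕(λ) = 1 / (α(1 + 1/γ) h^H K(λ)⁻¹ h). -/
noncomputable def Fmap (Nb m : ℕ) (α γ : ℝ) (h : Fin Nb → ℂ)
    (hv : Fin m → (Fin Nb → ℂ)) (l : Fin m → ℝ) : ℝ :=
  1 / (α * (1 + 1 / γ) * (star h ⬝ᵥ ((Kmat Nb m α hv l)⁻¹).mulVec h).re)

/-!
For `λ ≥ 0`, `K(λ) = 1 + α S(λ) + (1 - α) diag S(λ)` with `S(λ) = ∑ₖ λₖ hₖ hₖᴴ` is positive
definite, `λ ↦ K(λ)` is monotone in the Loewner order, and `ρ K(λ) - K(ρ λ) = (ρ - 1) 1` is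
positive definite for `ρ > 1`. The form `B ↦ xᴴ B⁻¹ x` is antitone on positive definite matrices,
strictly so when the gap is positive definite: for `y = A⁻¹ x` and `z = (A - B) y`,
`xᴴ B⁻¹ x - xᴴ A⁻¹ x = zᴴ B⁻¹ z + yᴴ (A - B) y`. So `q(λ) = hᴴ K(λ)⁻¹ h` is positive and
nonincreasing with `q(ρ λ) > ρ⁻¹ q(λ)`, and `𝓕 = 1 / (α (1 + 1/γ) q)` inherits all three properties.
-/

open scoped ComplexOrder

namespace Matrix

variable {n : Type*} [Fintype n] [DecidableEq n]

lemma dotProduct_inv_mulVec_mulVec_eq {R : Type*} [CommRing R] [StarRing R]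
    {A B : Matrix n n R} (hB : IsUnit B) (hBh : B.IsHermitian) (y : n → R) :
    star (A *ᵥ y) ⬝ᵥ B⁻¹ *ᵥ (A *ᵥ y) = star (A *ᵥ y) ⬝ᵥ y
      + star ((A - B) *ᵥ y) ⬝ᵥ B⁻¹ *ᵥ ((A - B) *ᵥ y) + star y ⬝ᵥ (A - B) *ᵥ y := by
  have hBdet := (isUnit_iff_isUnit_det B).mp hB
  have hBh' : ∀ w, star (B *ᵥ y) ⬝ᵥ w = star y ⬝ᵥ B *ᵥ w := fun w => by
    rw [star_mulVec, hBh.eq, dotProduct_mulVec]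
  have hBB : B *ᵥ (B⁻¹ *ᵥ (A *ᵥ y)) = A *ᵥ y := by
    rw [mulVec_mulVec, mul_nonsing_inv _ hBdet, one_mulVec]
  have hBB' : B⁻¹ *ᵥ (B *ᵥ y) = y := by
    rw [mulVec_mulVec, nonsing_inv_mul _ hBdet, one_mulVec]
  simp only [sub_mulVec, star_sub, mulVec_sub, sub_dotProduct, dotProduct_sub, hBB', hBh', hBB]
  ring

variable {K : Type*} [Field K] [PartialOrder K] [StarRing K] [StarOrderedRing K]

lemma PosDef.dotProduct_inv_mulVec_le_of_posSemidef_sub {A B : Matrix n n K} (hB : B.PosDef)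
    (hAB : (A - B).PosSemidef) (x : n → K) :
    star x ⬝ᵥ A⁻¹ *ᵥ x ≤ star x ⬝ᵥ B⁻¹ *ᵥ x := by
  have hA : A.PosDef := by simpa using PosDef.posSemidef_add hAB hB
  set y := A⁻¹ *ᵥ x
  have hx : x = A *ᵥ y := by
    rw [mulVec_mulVec, mul_nonsing_inv _ ((isUnit_iff_isUnit_det A).mp hA.isUnit), one_mulVec]
  rw [hx, dotProduct_inv_mulVec_mulVec_eq hB.isUnit hB.isHermitian, ← hx, add_assoc]
  exact le_add_of_nonneg_right <| add_nonneg (hB.inv.posSemidef.dotProduct_mulVec_nonneg _)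
    (hAB.dotProduct_mulVec_nonneg y)

lemma PosDef.dotProduct_inv_mulVec_lt_of_posDef_sub {A B : Matrix n n K} (hB : B.PosDef)
    (hAB : (A - B).PosDef) {x : n → K} (hx : x ≠ 0) :
    star x ⬝ᵥ A⁻¹ *ᵥ x < star x ⬝ᵥ B⁻¹ *ᵥ x := by
  have hA : A.PosDef := by simpa using hAB.add hB
  set y := A⁻¹ *ᵥ x
  have hxy : x = A *ᵥ y := by
    rw [mulVec_mulVec, mul_nonsing_inv _ ((isUnit_iff_isUnit_det A).mp hA.isUnit), one_mulVec]
  have hy : y ≠ 0 := by rintro hy; simp [hy, hx] at hxy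
  rw [hxy, dotProduct_inv_mulVec_mulVec_eq hB.isUnit hB.isHermitian, ← hxy, add_assoc]
  exact lt_add_of_pos_right _ <| add_pos_of_nonneg_of_pos
    (hB.inv.posSemidef.dotProduct_mulVec_nonneg _) (hAB.dotProduct_mulVec_pos hy)

end Matrix

section

variable {ι n : Type*} [Fintype ι]

noncomputable def gramSum (hv : ι → n → ℂ) (l : ι → ℝ) : Matrix n n ℂ :=
  ∑ k, ((l k : ℝ) : ℂ) • vecMulVec (hv k) (star (hv k))

lemma gramSum_posSemidef [Fintype n] (hv : ι → n → ℂ) {l : ι → ℝ} (hl : ∀ k, 0 ≤ l k) :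
    (gramSum hv l).PosSemidef :=
  posSemidef_sum _ fun k _ =>
    (posSemidef_vecMulVec_self_star (hv k)).smul (Complex.zero_le_real.mpr (hl k))

lemma gramSum_sub (hv : ι → n → ℂ) (l l' : ι → ℝ) :
    gramSum hv l - gramSum hv l' = gramSum hv (l - l') := by
  simp [gramSum, sub_smul]

lemma gramSum_smul (hv : ι → n → ℂ) (c : ℝ) (l : ι → ℝ) :
    gramSum hv (c • l) = (c : ℂ) • gramSum hv l := by
  simp only [gramSum, Pi.smul_apply, smul_eq_mul, Complex.ofReal_mul, Finset.smul_sum, smul_smul]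

noncomputable def diagMix [DecidableEq n] (α : ℝ) (S : Matrix n n ℂ) : Matrix n n ℂ :=
  (α : ℂ) • S + ((1 - α : ℝ) : ℂ) • diagonal S.diag

lemma Matrix.PosSemidef.diagMix [DecidableEq n] {α : ℝ} (hα₀ : 0 ≤ α) (hα₁ : α ≤ 1)
    {S : Matrix n n ℂ} (hS : S.PosSemidef) : (diagMix α S).PosSemidef :=
  (hS.smul (Complex.zero_le_real.mpr hα₀)).add <|
    (PosSemidef.diagonal fun _ => hS.diag_nonneg).smul
      (Complex.zero_le_real.mpr (sub_nonneg.mpr hα₁))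

lemma diagMix_sub [DecidableEq n] (α : ℝ) (S T : Matrix n n ℂ) :
    diagMix α S - diagMix α T = diagMix α (S - T) := by
  simp only [diagMix, diag_sub, Pi.sub_def, ← diagonal_sub, smul_sub]
  abel

lemma diagMix_smul [DecidableEq n] (α : ℝ) (c : ℂ) (S : Matrix n n ℂ) :
    diagMix α (c • S) = c • diagMix α S := by
  simp only [diagMix, diag_smul, diagonal_smul, smul_add, smul_comm c]

end

section

variable {Nb m : ℕ} {α : ℝ} (hv : Fin m → Fin Nb → ℂ)

lemma Kmat_eq_one_add_diagMix (l : Fin m → ℝ) :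
    Kmat Nb m α hv l = 1 + diagMix α (gramSum hv l) :=
  add_assoc _ _ _

lemma Kmat_posDef (hα₀ : 0 ≤ α) (hα₁ : α ≤ 1) {l : Fin m → ℝ} (hl : ∀ k, 0 ≤ l k) :
    (Kmat Nb m α hv l).PosDef := by
  rw [Kmat_eq_one_add_diagMix]
  exact PosDef.one.add_posSemidef ((gramSum_posSemidef hv hl).diagMix hα₀ hα₁)

lemma Kmat_sub_Kmat_posSemidef (hα₀ : 0 ≤ α) (hα₁ : α ≤ 1) {l l' : Fin m → ℝ}
    (hle : ∀ k, l' k ≤ l k) : (Kmat Nb m α hv l - Kmat Nb m α hv l').PosSemidef := by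
  rw [Kmat_eq_one_add_diagMix, Kmat_eq_one_add_diagMix, add_sub_add_left_eq_sub, diagMix_sub,
    gramSum_sub]
  exact (gramSum_posSemidef hv fun k => sub_nonneg.mpr (hle k)).diagMix hα₀ hα₁

lemma smul_Kmat_sub_Kmat_smul (ρ : ℝ) (l : Fin m → ℝ) :
    (ρ : ℂ) • Kmat Nb m α hv l - Kmat Nb m α hv (ρ • l) = ((ρ : ℂ) - 1) • 1 := by
  rw [Kmat_eq_one_add_diagMix, Kmat_eq_one_add_diagMix, gramSum_smul, diagMix_smul, smul_add,
    sub_smul, one_smul]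
  abel

lemma re_dotProduct_Kmat_inv_le (hα₀ : 0 ≤ α) (hα₁ : α ≤ 1) {l l' : Fin m → ℝ}
    (hl' : ∀ k, 0 ≤ l' k) (hle : ∀ k, l' k ≤ l k) (x : Fin Nb → ℂ) :
    (star x ⬝ᵥ (Kmat Nb m α hv l)⁻¹ *ᵥ x).re ≤ (star x ⬝ᵥ (Kmat Nb m α hv l')⁻¹ *ᵥ x).re :=
  Complex.re_le_re <| (Kmat_posDef hv hα₀ hα₁ hl').dotProduct_inv_mulVec_le_of_posSemidef_sub
    (Kmat_sub_Kmat_posSemidef hv hα₀ hα₁ hle) x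

lemma inv_mul_re_dotProduct_Kmat_inv_lt (hα₀ : 0 ≤ α) (hα₁ : α ≤ 1) {ρ : ℝ} (hρ : 1 < ρ)
    {l : Fin m → ℝ} (hl : ∀ k, 0 ≤ l k) {x : Fin Nb → ℂ} (hx : x ≠ 0) :
    ρ⁻¹ * (star x ⬝ᵥ (Kmat Nb m α hv l)⁻¹ *ᵥ x).re
      < (star x ⬝ᵥ (Kmat Nb m α hv (ρ • l))⁻¹ *ᵥ x).re := by
  have hρ₀ : (ρ : ℂ) ≠ 0 := Complex.ofReal_ne_zero.mpr (by linarith)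
  have hρl : ∀ k, 0 ≤ (ρ • l) k := fun k => mul_nonneg (by linarith) (hl k)
  have hK := Kmat_posDef hv hα₀ hα₁ hl
  have hgap : ((ρ : ℂ) • Kmat Nb m α hv l - Kmat Nb m α hv (ρ • l)).PosDef := by
    rw [smul_Kmat_sub_Kmat_smul]
    exact PosDef.one.smul (sub_pos.mpr (by exact_mod_cast hρ))
  have hlt := (Kmat_posDef hv hα₀ hα₁ hρl).dotProduct_inv_mulVec_lt_of_posDef_sub hgap hx
  have hinv : ((ρ : ℂ) • Kmat Nb m α hv l)⁻¹ = (ρ : ℂ)⁻¹ • (Kmat Nb m α hv l)⁻¹ := by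
    simpa [Units.smul_def] using
      inv_smul' (Kmat Nb m α hv l) (Units.mk0 _ hρ₀) ((isUnit_iff_isUnit_det _).mp hK.isUnit)
  rw [hinv, smul_mulVec, dotProduct_smul, smul_eq_mul, ← Complex.ofReal_inv] at hlt
  simpa using (Complex.lt_def.mp hlt).1

end

/-- The map 𝓕 is a standard interference function: positive, monotone, and scalable. -/
theorem Fmap_is_standard
    (Nb m : ℕ) (α γ : ℝ) (hα : 0 < α ∧ α ≤ 1) (hγ : 0 < γ)
    (h : Fin Nb → ℂ) (hh : h ≠ 0) (hv : Fin m → (Fin Nb → ℂ)) :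
    (∀ l : Fin m → ℝ, (∀ k, 0 ≤ l k) → 0 < Fmap Nb m α γ h hv l) ∧
      (∀ l l' : Fin m → ℝ, (∀ k, 0 ≤ l' k) → (∀ k, l' k ≤ l k) →
        Fmap Nb m α γ h hv l' ≤ Fmap Nb m α γ h hv l) ∧
      (∀ ρ : ℝ, 1 < ρ → ∀ l : Fin m → ℝ, (∀ k, 0 ≤ l k) →
        Fmap Nb m α γ h hv (ρ • l) < ρ * Fmap Nb m α γ h hv l) := by
  obtain ⟨hα₀, hα₁⟩ := hα
  have hc : 0 < α * (1 + 1 / γ) := by positivity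
  have hq : ∀ l : Fin m → ℝ, (∀ k, 0 ≤ l k) →
      0 < (star h ⬝ᵥ (Kmat Nb m α hv l)⁻¹ *ᵥ h).re :=
    fun l hl => (Kmat_posDef hv hα₀.le hα₁ hl).inv.re_dotProduct_pos hh
  refine ⟨fun l hl => ?_, fun l l' hl' hle => ?_, fun ρ hρ l hl => ?_⟩
  · exact one_div_pos.mpr (mul_pos hc (hq l hl))
  · exact one_div_le_one_div_of_le (mul_pos hc (hq l fun k => (hl' k).trans (hle k)))
      (mul_le_mul_of_nonneg_left (re_dotProduct_Kmat_inv_le hv hα₀.le hα₁ hl' hle h) hc.le)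
  · have hρ₀ : 0 < ρ := by linarith
    calc Fmap Nb m α γ h hv (ρ • l)
        < 1 / (α * (1 + 1 / γ) * (ρ⁻¹ * (star h ⬝ᵥ (Kmat Nb m α hv l)⁻¹ *ᵥ h).re)) :=
          one_div_lt_one_div_of_lt (by have := hq l hl; positivity) <|
            mul_lt_mul_of_pos_left (inv_mul_re_dotProduct_Kmat_inv_lt hv hα₀.le hα₁ hρ hl hh) hc
      _ = ρ * Fmap Nb m α γ h hv l := by
          rw [Fmap]
          field_simp
end
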